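/- In the canonical triangulation of the support of a skeleton of an r-uniform linear k-cycle (a maximal planar triangulation on the 2k support vertices v_1, u_1, v_2, u_2, ..., v_k, u_k with triangles as in the paper's Figure 1), the following holds: for any proper subset U of the support that induces at least one triangle of the canonical triangulation, there exists a vertex x of the support with x ∉ U and vertices x', y, z ∈ U such that both {x, y, z} and {x', y, z} are triangles of the canonical triangulation. -/

import Mathlib

/-!
If no extension witness exists, `U` is closed under passing from a triangle to any triangle
sharing an edge with it. The internal triangles of the zig-zag triangulation form a path in the
dual graph, `B_1, B_{-1}, B_2, B_{-2}, …` where `B_i = {v_i, v_{i+1}, v_{1-i}}`, and every outer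
triangle `{v_j, u_j, v_{j+1}}` shares the edge `v_j v_{j+1}` with some internal triangle. So the
dual graph is connected, and one triangle inside `U` forces every triangle, hence every vertex,
into `U`.
-/

open Finset

/-- The vertices of the support of a skeleton of `C^r_k`: the core vertices `v_i = inl i`
and the chosen non-core vertices `u_i = inr i`, indices in `ZMod k` (paper indices mod `k`,
so `v_{k-i+1}` corresponds to `inl (1 - i)`). -/
abbrev SupportVertex (k : ℕ) := ZMod k ⊕ ZMod k

/-- The triangles of the canonical triangulation of the support: the outer triangles
`{v_i, u_i, v_{i+1}}` together with the internal zig-zag triangles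
`{v_i, v_{k-i+1}, v_{k-i+2}}` and `{v_i, v_{i+1}, v_{k-i+1}}` of the core cycle
(degenerate triples are excluded). -/
def canonicalTriangles (k : ℕ) : Set (Finset (SupportVertex k)) :=
  {T | T.card = 3 ∧
    ((∃ i : ZMod k, T = {Sum.inl i, Sum.inr i, Sum.inl (i + 1)}) ∨
     (∃ i : ZMod k, T = {Sum.inl i, Sum.inl (1 - i), Sum.inl (2 - i)}) ∨
     (∃ i : ZMod k, T = {Sum.inl i, Sum.inl (i + 1), Sum.inl (1 - i)}))}

section Triangles

variable {α : Type*}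

def SharesEdge (T T' : Finset α) : Prop :=
  ∃ y z, y ≠ z ∧ y ∈ T ∧ z ∈ T ∧ y ∈ T' ∧ z ∈ T'

theorem SharesEdge.symm {T T' : Finset α} : SharesEdge T T' → SharesEdge T' T :=
  fun ⟨y, z, hyz, hyT, hzT, hyT', hzT'⟩ => ⟨y, z, hyz, hyT', hzT', hyT, hzT⟩

def IsEdgeClosed (S : Set (Finset α)) (U : Finset α) : Prop :=
  ∀ ⦃T T'⦄, T ∈ S → T' ∈ S → SharesEdge T T' → T ⊆ U → T' ⊆ U

variable [DecidableEq α]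

theorem Finset.exists_eq_insert_pair_of_card_eq_three {T : Finset α} (hT : #T = 3) {y z : α}
    (hyz : y ≠ z) (hy : y ∈ T) (hz : z ∈ T) : ∃ x, T = {x, y, z} := by
  have hsub : {y, z} ⊆ T := insert_subset hy (singleton_subset_iff.2 hz)
  have hone : #(T \ {y, z}) = 1 := by
    rw [card_sdiff_of_subset hsub, hT, card_pair hyz]
  obtain ⟨x, hx⟩ := card_eq_one.1 hone
  exact ⟨x, by rw [← sdiff_union_of_subset hsub, hx]; rfl⟩

theorem Finset.ne_of_card_triple_eq_three {a b c : α} (h : #({a, b, c} : Finset α) = 3) :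
    a ≠ b ∧ a ≠ c ∧ b ≠ c := by
  refine ⟨?_, ?_, ?_⟩ <;> rintro rfl <;>
    simp only [mem_insert, mem_singleton, true_or, or_true, insert_eq_of_mem] at h <;>
    exact absurd h (card_le_two.trans_lt (by norm_num)).ne

theorem isEdgeClosed_of_not_exists {S : Set (Finset α)} (hS : ∀ T ∈ S, #T = 3)
    {U : Finset α}
    (h : ¬ ∃ x, x ∉ U ∧ ∃ x' y z, x' ∈ U ∧ y ∈ U ∧ z ∈ U ∧
      ({x, y, z} : Finset α) ∈ S ∧ ({x', y, z} : Finset α) ∈ S) :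
    IsEdgeClosed S U := by
  rintro T T' hT hT' ⟨y, z, hyz, hyT, hzT, hyT', hzT'⟩ hTU
  obtain ⟨x', rfl⟩ := exists_eq_insert_pair_of_card_eq_three (hS T hT) hyz hyT hzT
  obtain ⟨x, rfl⟩ := exists_eq_insert_pair_of_card_eq_three (hS _ hT') hyz hyT' hzT'
  have hyU : y ∈ U := hTU hyT
  have hzU : z ∈ U := hTU hzT
  have hxU : x ∈ U := by
    by_contra hxU
    exact h ⟨x, hxU, x', y, z, hTU (mem_insert_self _ _), hyU, hzU, hT', hT⟩
  exact insert_subset hxU (insert_subset hyU (singleton_subset_iff.2 hzU))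

end Triangles

theorem iff_of_forall_iff_succ {P : ℕ → Prop} {N : ℕ} (h : ∀ n < N, (P n ↔ P (n + 1)))
    {a b : ℕ} (ha : a ≤ N) (hb : b ≤ N) : P a ↔ P b := by
  have key : ∀ n ≤ N, (P n ↔ P 0) := by
    intro n
    induction n with
    | zero => simp
    | succ n ih => exact fun hn => (h n (by omega)).symm.trans (ih (by omega))
  exact (key a ha).trans (key b hb).symm

theorem ZMod.natCast_ne_zero_of_pos_of_lt {n k : ℕ} (h0 : 0 < n) (hn : n < k) :
    (n : ZMod k) ≠ 0 := by
  rw [ne_eq, ZMod.natCast_eq_zero_iff]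
  exact fun hdvd => absurd (Nat.le_of_dvd h0 hdvd) (by omega)

namespace CanonicalTriangulation

variable {k : ℕ}

def outerTriangle (k : ℕ) (j : ZMod k) : Finset (SupportVertex k) :=
  {Sum.inl j, Sum.inr j, Sum.inl (j + 1)}

def innerTriangle (k : ℕ) (i : ZMod k) : Finset (SupportVertex k) :=
  {Sum.inl i, Sum.inl (i + 1), Sum.inl (1 - i)}

/-- `innerTriangle k i` has three distinct vertices: `v_{1-i} ≠ v_{i+1}` and `v_{1-i} ≠ v_i`. -/
def Nondegenerate (i : ZMod k) : Prop := 2 * i ≠ 0 ∧ 2 * i ≠ 1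

theorem mem_canonicalTriangles [Fact (1 < k)] {T : Finset (SupportVertex k)} :
    T ∈ canonicalTriangles k ↔
      (∃ j, T = outerTriangle k j) ∨ ∃ i, Nondegenerate i ∧ T = innerTriangle k i := by
  constructor
  · rintro ⟨hcard, ⟨j, rfl⟩ | ⟨i, rfl⟩ | ⟨i, rfl⟩⟩
    · exact Or.inl ⟨j, rfl⟩
    · obtain ⟨h1, h2, -⟩ := ne_of_card_triple_eq_three hcard
      refine Or.inr ⟨1 - i, ⟨fun h => h2 ?_, fun h => h1 ?_⟩, ?_⟩
      · rw [Sum.inl.injEq]; linear_combination -h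
      · rw [Sum.inl.injEq]; linear_combination -h
      · simp only [innerTriangle, show 1 - i + 1 = 2 - i by ring, sub_sub_cancel]
        ext; simp only [mem_insert, mem_singleton]; tauto
    · obtain ⟨-, h2, h3⟩ := ne_of_card_triple_eq_three hcard
      refine Or.inr ⟨i, ⟨fun h => h3 ?_, fun h => h2 ?_⟩, rfl⟩
      · rw [Sum.inl.injEq]; linear_combination h
      · rw [Sum.inl.injEq]; linear_combination h
  · rintro (⟨j, rfl⟩ | ⟨i, ⟨h0, h1⟩, rfl⟩)
    · refine ⟨card_eq_three.2 ⟨_, _, _, by simp, ?_, by simp, rfl⟩, Or.inl ⟨j, rfl⟩⟩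
      simp
    · refine ⟨card_eq_three.2 ⟨_, _, _, ?_, ?_, ?_, rfl⟩, Or.inr (Or.inr ⟨i, rfl⟩)⟩ <;>
        simp only [ne_eq, Sum.inl.injEq]
      · simp
      · exact fun h => h1 (by linear_combination h)
      · exact fun h => h0 (by linear_combination h)

theorem sharesEdge_innerTriangle_neg {i : ZMod k} (h : 2 * i ≠ 0) :
    SharesEdge (innerTriangle k i) (innerTriangle k (-i)) := by
  refine ⟨Sum.inl (i + 1), Sum.inl (1 - i), ?_, by simp [innerTriangle],
    by simp [innerTriangle], ?_, ?_⟩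
  · simp only [ne_eq, Sum.inl.injEq]
    exact fun h' => h (by linear_combination h')
  · simp only [innerTriangle, mem_insert, mem_singleton, Sum.inl.injEq]
    right; right; ring
  · simp only [innerTriangle, mem_insert, mem_singleton, Sum.inl.injEq]
    right; left; ring

theorem sharesEdge_innerTriangle_one_sub {i : ZMod k} (h : 2 * i ≠ 1) :
    SharesEdge (innerTriangle k i) (innerTriangle k (1 - i)) := by
  refine ⟨Sum.inl i, Sum.inl (1 - i), ?_, by simp [innerTriangle],
    by simp [innerTriangle], ?_, by simp [innerTriangle]⟩
  · simp only [ne_eq, Sum.inl.injEq]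
    exact fun h' => h (by linear_combination h')
  · simp [innerTriangle]

theorem exists_sharesEdge_outerTriangle (hk : 3 ≤ k) (j : ZMod k) :
    ∃ i, Nondegenerate i ∧ SharesEdge (outerTriangle k j) (innerTriangle k i) := by
  have h2 : (2 : ZMod k) ≠ 0 := by
    exact_mod_cast ZMod.natCast_ne_zero_of_pos_of_lt (k := k) two_pos (by omega)
  have h1 : (1 : ZMod k) ≠ 0 := by
    exact_mod_cast ZMod.natCast_ne_zero_of_pos_of_lt (k := k) one_pos (by omega)
  have hedge : ∀ i, Sum.inl j ∈ innerTriangle k i → Sum.inl (j + 1) ∈ innerTriangle k i →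
      SharesEdge (outerTriangle k j) (innerTriangle k i) := fun i hj hj1 =>
    ⟨_, _, by simpa using h1, by simp [outerTriangle], by simp [outerTriangle], hj, hj1⟩
  by_cases hj1 : 2 * j = 1
  · refine ⟨j - 1, ⟨fun h => h1 (by linear_combination hj1 - h),
      fun h => h2 (by linear_combination hj1 - h)⟩, hedge _ (by simp [innerTriangle]) ?_⟩
    simp only [innerTriangle, mem_insert, mem_singleton, Sum.inl.injEq]
    right; right; linear_combination hj1
  by_cases hj0 : 2 * j = 0
  · refine ⟨j + 1, ⟨fun h => h2 (by linear_combination h - hj0),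
      fun h => h1 (by linear_combination h - hj0)⟩, hedge _ ?_ (by simp [innerTriangle])⟩
    simp only [innerTriangle, mem_insert, mem_singleton, Sum.inl.injEq]
    right; right; linear_combination hj0
  exact ⟨j, ⟨hj0, hj1⟩, hedge _ (by simp [innerTriangle]) (by simp [innerTriangle])⟩

def zigzag (k n : ℕ) : ZMod k :=
  if Even n then ((n / 2 + 1 : ℕ) : ZMod k) else -((n / 2 + 1 : ℕ) : ZMod k)

theorem zigzag_two_mul (m : ℕ) : zigzag k (2 * m) = m + 1 := by
  simp [zigzag]

theorem zigzag_two_mul_add_one (m : ℕ) : zigzag k (2 * m + 1) = -(m + 1) := by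
  simp [zigzag, show (2 * m + 1) / 2 = m by omega]

theorem nondegenerate_zigzag {n : ℕ} (hn : n + 3 ≤ k) : Nondegenerate (zigzag k n) := by
  have hn1 : ((n + 1 : ℕ) : ZMod k) ≠ 0 :=
    ZMod.natCast_ne_zero_of_pos_of_lt (by omega) (by omega)
  have hn2 : ((n + 2 : ℕ) : ZMod k) ≠ 0 :=
    ZMod.natCast_ne_zero_of_pos_of_lt (by omega) (by omega)
  obtain ⟨m, rfl | rfl⟩ := Nat.even_or_odd' n
  · rw [zigzag_two_mul]
    push_cast at hn1 hn2
    exact ⟨fun h => hn2 (by linear_combination h), fun h => hn1 (by linear_combination h)⟩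
  · rw [zigzag_two_mul_add_one]
    push_cast at hn1 hn2
    exact ⟨fun h => hn1 (by linear_combination -h), fun h => hn2 (by linear_combination -h)⟩

theorem sharesEdge_zigzag_succ {n : ℕ} (hn : n + 3 ≤ k) :
    SharesEdge (innerTriangle k (zigzag k n)) (innerTriangle k (zigzag k (n + 1))) := by
  have hnd := nondegenerate_zigzag hn
  obtain ⟨m, rfl | rfl⟩ := Nat.even_or_odd' n
  · rw [zigzag_two_mul_add_one]
    rw [zigzag_two_mul] at hnd ⊢
    exact sharesEdge_innerTriangle_neg hnd.1
  · rw [show 2 * m + 1 + 1 = 2 * (m + 1) by ring, zigzag_two_mul]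
    rw [zigzag_two_mul_add_one] at hnd ⊢
    convert sharesEdge_innerTriangle_one_sub hnd.2 using 2
    push_cast
    ring

theorem exists_zigzag_eq [NeZero k] {i : ZMod k} (hi : Nondegenerate i) :
    ∃ n, n + 3 ≤ k ∧ zigzag k n = i := by
  obtain ⟨t, htk, rfl⟩ : ∃ t < k, (t : ZMod k) = i :=
    ⟨i.val, i.val_lt, i.natCast_zmod_val⟩
  have ht0 : t ≠ 0 := fun h => hi.1 (by simp [h])
  have h2t0 : 2 * t ≠ k := fun h => hi.1 (by
    exact_mod_cast (congrArg (Nat.cast : ℕ → ZMod k) h).trans (ZMod.natCast_self k))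
  have h2t1 : 2 * t ≠ k + 1 := fun h => hi.2 (by
    have := congrArg (Nat.cast : ℕ → ZMod k) h
    push_cast [ZMod.natCast_self] at this
    linear_combination this)
  rcases lt_or_ge (2 * t) k with hlt | hge
  · refine ⟨2 * (t - 1), by omega, ?_⟩
    rw [zigzag_two_mul, ← Nat.cast_add_one, Nat.sub_add_cancel (by omega)]
  · refine ⟨2 * (k - t - 1) + 1, by omega, ?_⟩
    rw [zigzag_two_mul_add_one, ← Nat.cast_add_one, Nat.sub_add_cancel (by omega),
      Nat.cast_sub htk.le, ZMod.natCast_self]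
    ring

theorem innerTriangle_subset_of_isEdgeClosed [Fact (1 < k)] {U : Finset (SupportVertex k)}
    (hU : IsEdgeClosed (canonicalTriangles k) U) {i j : ZMod k} (hi : Nondegenerate i)
    (hj : Nondegenerate j) (hiU : innerTriangle k i ⊆ U) : innerTriangle k j ⊆ U := by
  have hmem : ∀ n, n + 3 ≤ k → innerTriangle k (zigzag k n) ∈ canonicalTriangles k :=
    fun n hn => mem_canonicalTriangles.2 (Or.inr ⟨_, nondegenerate_zigzag hn, rfl⟩)
  have hstep : ∀ n < k - 3,
      (innerTriangle k (zigzag k n) ⊆ U ↔ innerTriangle k (zigzag k (n + 1)) ⊆ U) :=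
    fun n hn =>
      ⟨hU (hmem n (by omega)) (hmem (n + 1) (by omega)) (sharesEdge_zigzag_succ (by omega)),
        hU (hmem (n + 1) (by omega)) (hmem n (by omega)) (sharesEdge_zigzag_succ (by omega)).symm⟩
  obtain ⟨a, ha, rfl⟩ := exists_zigzag_eq hi
  obtain ⟨b, hb, rfl⟩ := exists_zigzag_eq hj
  exact (iff_of_forall_iff_succ hstep (by omega) (by omega)).1 hiU

theorem mem_of_isEdgeClosed (hk : 3 ≤ k) {U : Finset (SupportVertex k)}
    (hU : IsEdgeClosed (canonicalTriangles k) U) {T : Finset (SupportVertex k)}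
    (hT : T ∈ canonicalTriangles k) (hTU : T ⊆ U) (v : SupportVertex k) : v ∈ U := by
  have : Fact (1 < k) := ⟨by omega⟩
  have hinner : ∀ i, Nondegenerate i → innerTriangle k i ∈ canonicalTriangles k :=
    fun i hi => mem_canonicalTriangles.2 (Or.inr ⟨i, hi, rfl⟩)
  obtain ⟨i₀, hi₀, hi₀U⟩ : ∃ i, Nondegenerate i ∧ innerTriangle k i ⊆ U := by
    rcases mem_canonicalTriangles.1 hT with ⟨j, rfl⟩ | ⟨i, hi, rfl⟩
    · obtain ⟨i, hi, hshare⟩ := exists_sharesEdge_outerTriangle hk j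
      exact ⟨i, hi, hU hT (hinner i hi) hshare hTU⟩
    · exact ⟨i, hi, hTU⟩
  have houter : ∀ j, outerTriangle k j ⊆ U := fun j => by
    obtain ⟨i, hi, hshare⟩ := exists_sharesEdge_outerTriangle hk j
    exact hU (hinner i hi) (mem_canonicalTriangles.2 (Or.inl ⟨j, rfl⟩)) hshare.symm
      (innerTriangle_subset_of_isEdgeClosed hU hi₀ hi hi₀U)
  rcases v with j | j <;> exact houter j (by simp [outerTriangle])

end CanonicalTriangulation

/-- For any proper subset `U` of the support inducing at least one triangle of the canonical
triangulation, there are a vertex `x ∉ U` and vertices `x', y, z ∈ U` such that `{x, y, z}`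
and `{x', y, z}` are both triangles of the canonical triangulation. -/
theorem canonical_triangulation_extension (k : ℕ) (hk : 3 ≤ k)
    (U : Finset (SupportVertex k))
    (hproper : ∃ w : SupportVertex k, w ∉ U)
    (htri : ∃ T ∈ canonicalTriangles k, T ⊆ U) :
    ∃ x : SupportVertex k, x ∉ U ∧
      ∃ x' y z : SupportVertex k, x' ∈ U ∧ y ∈ U ∧ z ∈ U ∧
        ({x, y, z} : Finset (SupportVertex k)) ∈ canonicalTriangles k ∧
        ({x', y, z} : Finset (SupportVertex k)) ∈ canonicalTriangles k := by
  by_contra h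
  obtain ⟨w, hw⟩ := hproper
  obtain ⟨T, hT, hTU⟩ := htri
  exact hw (CanonicalTriangulation.mem_of_isEdgeClosed hk
    (isEdgeClosed_of_not_exists (fun T hT => hT.1) h) hT hTU w)
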